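/- arXiv:1005.1987 — 2 statements merged into one kernel-verified Lean document; each statement's English description precedes it below -/
import Mathlib

section
/- If ≺₁ and ≺₀ are wellfounded transitive relations on ℕ, then the exponential relation E(≺₁,≺₀) on finite sequences of pairs with ≺₁-decreasing first components is wellfounded. -/
/-!
Send `⟨(aᵢ, bᵢ) : i < ℓ⟩` to the ordinal `Σ κ ^ ρ₁(aᵢ) * (ρ₀(bᵢ) + 1)`, where `ρ₁`, `ρ₀` are the
ranks of the two well-founded relations and `κ` exceeds every `ρ₀(b) + 1`. In the domain the
exponents strictly decrease, so everything after a summand `κ ^ e * (c + 1)` is below `κ ^ e`, as in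
a Cantor normal form to base `κ`. Hence this evaluation turns `ExpLt` into `<` on ordinals.
-/

/-- The exponential ordering on finite sequences of pairs. -/
def ExpLt {α β : Type*} (r1 : α → α → Prop) (r0 : β → β → Prop) :
    List (α × β) → List (α × β) → Prop :=
  List.Lex (Prod.Lex r1 r0)

/-- The domain: first components are `r1`-decreasing. -/
def ExpDom {α β : Type*} (r1 : α → α → Prop) (l : List (α × β)) : Prop :=
  List.Chain' (fun p q => r1 q.1 p.1) l

universe u

open Ordinal Order

namespace ExpLt

variable {α β : Type u}

noncomputable def cnfEval (κ : Ordinal.{u}) (e : α → Ordinal.{u}) (c : β → Ordinal.{u}) :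
    List (α × β) → Ordinal.{u}
  | [] => 0
  | p :: l => κ ^ e p.1 * (c p.2 + 1) + cnfEval κ e c l

section cnfEval

variable {κ : Ordinal.{u}} {e : α → Ordinal.{u}} {c : β → Ordinal.{u}}

@[simp]
theorem cnfEval_cons (p : α × β) (l : List (α × β)) :
    cnfEval κ e c (p :: l) = κ ^ e p.1 * (c p.2 + 1) + cnfEval κ e c l :=
  rfl

theorem cnfEval_cons_lt_of_lt {p : α × β} {l : List (α × β)} (h : cnfEval κ e c l < κ ^ e p.1) :
    cnfEval κ e c (p :: l) < κ ^ e p.1 * (c p.2 + 1 + 1) := by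
  rw [cnfEval_cons, mul_add_one (κ ^ e p.1) (c p.2 + 1)]
  exact add_lt_add_right h _

variable (hκ : ∀ b, c b + 1 < κ)
include hκ

theorem opow_mul_le_opow_succ (a : Ordinal.{u}) (b : β) :
    κ ^ a * (c b + 1 + 1) ≤ κ ^ succ a := by
  rw [opow_succ]
  exact mul_le_mul_right (add_one_le_of_lt (hκ b)) _

theorem cnfEval_lt_opow_of_pairwise_cons {p : α × β} {l : List (α × β)}
    (hl : (p :: l).Pairwise (fun p q => e q.1 < e p.1)) : cnfEval κ e c l < κ ^ e p.1 := by
  induction l generalizing p with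
  | nil => exact opow_pos _ (pos_of_gt (hκ p.2))
  | cons q l ih =>
    have hqp : e q.1 < e p.1 := List.rel_of_pairwise_cons hl List.mem_cons_self
    calc cnfEval κ e c (q :: l) < κ ^ e q.1 * (c q.2 + 1 + 1) :=
          cnfEval_cons_lt_of_lt (ih hl.of_cons)
      _ ≤ κ ^ succ (e q.1) := opow_mul_le_opow_succ hκ _ _
      _ ≤ κ ^ e p.1 := opow_le_opow_right (pos_of_gt (hκ q.2)) (succ_le_of_lt hqp)

theorem cnfEval_lt_cnfEval {r1 : α → α → Prop} {r0 : β → β → Prop}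
    (he : ∀ ⦃a a'⦄, r1 a a' → e a < e a') (hc : ∀ ⦃b b'⦄, r0 b b' → c b < c b')
    {s t : List (α × β)} (hs : s.Pairwise (fun p q => e q.1 < e p.1))
    (h : ExpLt r1 r0 s t) : cnfEval κ e c s < cnfEval κ e c t := by
  induction h with
  | @nil p l =>
    rw [cnfEval_cons]
    have hκp : 0 < κ ^ e p.1 := opow_pos _ (pos_of_gt (hκ p.2))
    exact (mul_pos hκp (add_pos_of_right zero_lt_one _)).trans_le le_self_add
  | cons _ ih =>
    rw [cnfEval_cons, cnfEval_cons]
    exact add_lt_add_right (ih hs.of_cons) _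
  | @rel p s q t hpq =>
    refine (cnfEval_cons_lt_of_lt (cnfEval_lt_opow_of_pairwise_cons hκ hs)).trans_le ?_
    refine le_trans ?_ (le_self_add : _ ≤ κ ^ e q.1 * (c q.2 + 1) + cnfEval κ e c t)
    rcases Prod.lex_def.1 hpq with h1 | ⟨h1, h0⟩
    · calc _ ≤ κ ^ succ (e p.1) := opow_mul_le_opow_succ hκ _ _
        _ ≤ κ ^ e q.1 := opow_le_opow_right (pos_of_gt (hκ p.2)) (succ_le_of_lt (he h1))
        _ ≤ κ ^ e q.1 * (c q.2 + 1) := Ordinal.le_mul_left _ (add_pos_of_right zero_lt_one _)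
    · rw [h1]
      exact mul_le_mul_right (add_le_add_left (add_one_le_of_lt (hc h0)) 1) _

end cnfEval

theorem pairwise_of_expDom {r1 : α → α → Prop} {e : α → Ordinal.{u}}
    (he : ∀ ⦃a a'⦄, r1 a a' → e a < e a') {l : List (α × β)} (hl : ExpDom r1 l) :
    l.Pairwise (fun p q => e q.1 < e p.1) :=
  (List.IsChain.imp (fun _ _ h => he h) hl).pairwise

theorem wellFounded (r1 : α → α → Prop) (r0 : β → β → Prop)
    [IsWellFounded α r1] [IsWellFounded β r0] :
    WellFounded (fun s t : {l : List (α × β) // ExpDom r1 l} => ExpLt r1 r0 s.1 t.1) := by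
  let e := IsWellFounded.rank r1
  let c := IsWellFounded.rank r0
  let κ := ⨆ b, c b + 1 + 1
  have hκ : ∀ b, c b + 1 < κ := Ordinal.lt_iSup_add_one (fun b => c b + 1)
  have he : ∀ ⦃a a'⦄, r1 a a' → e a < e a' := fun _ _ => IsWellFounded.rank_lt_of_rel
  have hc : ∀ ⦃b b'⦄, r0 b b' → c b < c b' := fun _ _ => IsWellFounded.rank_lt_of_rel
  refine Subrelation.wf (fun {s t} h => ?_)
    (InvImage.wf (cnfEval κ e c ∘ Subtype.val) wellFounded_lt)
  exact cnfEval_lt_cnfEval hκ he hc (pairwise_of_expDom he s.2) h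

end ExpLt

theorem expLt_wellFounded_general (r1 r0 : ℕ → ℕ → Prop)
    (w1 : WellFounded r1) (w0 : WellFounded r0) :
    WellFounded (fun s t : {l : List (ℕ × ℕ) // ExpDom r1 l} =>
      ExpLt r1 r0 s.1 t.1) :=
  have : IsWellFounded ℕ r1 := ⟨w1⟩
  have : IsWellFounded ℕ r0 := ⟨w0⟩
  ExpLt.wellFounded r1 r0

theorem expLt_wellFounded (r1 r0 : ℕ → ℕ → Prop)
    (h1 : Transitive r1) (h0 : Transitive r0)
    (w1 : WellFounded r1) (w0 : WellFounded r0) :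
    WellFounded (fun s t : {l : List (ℕ × ℕ) // ExpDom r1 l} =>
      ExpLt r1 r0 s.1 t.1) :=
  expLt_wellFounded_general r1 r0 w1 w0
end

section
/- Let ≺₁, ≺₀ be transitive relations on ℕ and ≺_E = E(≺₁,≺₀). If a sequence σ = ⟨(n¹ᵢ,n⁰ᵢ) : i<ℓ⟩ in the domain has all first components in the accessible part of ≺₁ and all second components in the accessible part of ≺₀, then σ lies in the accessible part of the restriction of ≺_E to such sequences. -/
/-- Restriction of the exponential ordering to decreasing sequences all of
whose first (resp. second) components are accessible for `r1` (resp. `r0`). -/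
def ExpLtW (r1 r0 : ℕ → ℕ → Prop) (s t : List (ℕ × ℕ)) : Prop :=
  ExpLt r1 r0 s t ∧ ExpDom r1 s ∧ ExpDom r1 t ∧
    (∀ p ∈ s, Acc r1 p.1 ∧ Acc r0 p.2) ∧
    (∀ p ∈ t, Acc r1 p.1 ∧ Acc r0 p.2)


/-!
Call `a` a good head if prepending `(a, b)`, with `b` accessible, to an accessible sequence below
`a` keeps it accessible. A decreasing sequence of good heads is accessible, by induction from its
end. Every accessible `a` is a good head, by induction on `a`, then `b`, then the tail `l`: a
predecessor of `(a, b) :: l` is empty, or lowers only the tail, or lowers `b`, or starts with some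
`a₁ ≺₁ a`. In the last two cases its tail, resp. the whole predecessor, lies below `a`, hence
consists of good heads by the outer induction hypothesis.
-/

theorem ExpDom.rel_of_mem_tail {α β : Type*} {r1 : α → α → Prop} (h1 : Transitive r1)
    {q : α × β} {l : List (α × β)} (h : ExpDom r1 (q :: l)) : ∀ p ∈ l, r1 p.1 q.1 := by
  have : IsTrans (α × β) (fun p q => r1 q.1 p.1) := ⟨fun _ _ _ hxy hyz => h1 hyz hxy⟩
  exact (List.pairwise_cons.1 (List.isChain_iff_pairwise.1 h)).1

section

variable {r1 r0 : ℕ → ℕ → Prop}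

theorem acc_expLtW_nil : Acc (ExpLtW r1 r0) [] :=
  ⟨_, fun _ ht => nomatch ht.1⟩

theorem ExpLtW.of_cons_cons {p : ℕ × ℕ} {s t : List (ℕ × ℕ)} (h : ExpLtW r1 r0 (p :: s) (p :: t))
    (hst : ExpLt r1 r0 s t) : ExpLtW r1 r0 s t :=
  ⟨hst, h.2.1.tail, h.2.2.1.tail, fun q hq => h.2.2.2.1 q (List.mem_cons_of_mem _ hq),
    fun q hq => h.2.2.2.2 q (List.mem_cons_of_mem _ hq)⟩

variable (r1 r0) in
def GoodHead (a : ℕ) : Prop :=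
  ∀ b, Acc r0 b → ∀ l, Acc (ExpLtW r1 r0) l → (∀ p ∈ l, r1 p.1 a) →
    Acc (ExpLtW r1 r0) ((a, b) :: l)

theorem acc_expLtW_of_forall_goodHead (h1 : Transitive r1) :
    ∀ {l : List (ℕ × ℕ)}, ExpDom r1 l → (∀ p ∈ l, GoodHead r1 r0 p.1 ∧ Acc r0 p.2) →
      Acc (ExpLtW r1 r0) l
  | [], _, _ => acc_expLtW_nil
  | p :: l, hdom, hgood =>
    have hhead := hgood p List.mem_cons_self
    hhead.1 p.2 hhead.2 l
      (acc_expLtW_of_forall_goodHead h1 hdom.tail fun p hp => hgood p (List.mem_cons_of_mem _ hp))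
      (hdom.rel_of_mem_tail h1)

theorem goodHead_of_acc (h1 : Transitive r1) {a : ℕ} (ha : Acc r1 a) : GoodHead r1 r0 a := by
  induction ha with | intro a _ IHa =>
  have acc_of_below : ∀ {l : List (ℕ × ℕ)}, ExpDom r1 l → (∀ p ∈ l, r1 p.1 a) →
      (∀ p ∈ l, Acc r1 p.1 ∧ Acc r0 p.2) → Acc (ExpLtW r1 r0) l :=
    fun hdom hbelow hacc => acc_expLtW_of_forall_goodHead h1 hdom fun p hp =>
      ⟨IHa p.1 (hbelow p hp), (hacc p hp).2⟩
  intro b hb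
  induction hb with | intro b _ IHb =>
  intro l hl
  induction hl with | intro l _ IHl =>
  intro hbelow
  refine ⟨_, fun t ht => ?_⟩
  obtain ⟨hlex, hdt, -, hacct, -⟩ := id ht
  cases hlex with
  | nil => exact acc_expLtW_nil
  | cons hlex =>
    exact IHl _ (ht.of_cons_cons hlex) (hdt.rel_of_mem_tail h1)
  | rel hhead =>
    cases hhead with
    | left _ _ ha₁ =>
      refine acc_of_below hdt ?_ hacct
      exact List.forall_mem_cons.2 ⟨ha₁, fun q hq => h1 (hdt.rel_of_mem_tail h1 q hq) ha₁⟩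
    | right _ hb₁ =>
      have hbelow₁ := hdt.rel_of_mem_tail h1
      have hacc₁ := fun q hq => hacct q (List.mem_cons_of_mem _ hq)
      exact IHb _ hb₁ _ (acc_of_below hdt.tail hbelow₁ hacc₁) hbelow₁

end

theorem expLtW_accessible_general (r1 r0 : ℕ → ℕ → Prop)
    (h1 : Transitive r1)
    (σ : List (ℕ × ℕ)) (hdom : ExpDom r1 σ)
    (hacc : ∀ p ∈ σ, Acc r1 p.1 ∧ Acc r0 p.2) :
    Acc (ExpLtW r1 r0) σ :=
  acc_expLtW_of_forall_goodHead h1 hdom fun p hp =>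
    ⟨goodHead_of_acc h1 (hacc p hp).1, (hacc p hp).2⟩

theorem expLtW_accessible (r1 r0 : ℕ → ℕ → Prop)
    (h1 : Transitive r1) (h0 : Transitive r0)
    (σ : List (ℕ × ℕ)) (hdom : ExpDom r1 σ)
    (hacc : ∀ p ∈ σ, Acc r1 p.1 ∧ Acc r0 p.2) :
    Acc (ExpLtW r1 r0) σ :=
  expLtW_accessible_general r1 r0 h1 σ hdom hacc
end
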